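/- Dual Bounding Theorem, part (2): under the hypotheses of part (1) (first-order conditions of the lower model, original, and upper model problems at (q̲, λ̲), (q, λ), (q̄, λ̄) with F differentiable with L-Lipschitz continuous gradient, μ > 0, nonzero j-th row a_j, λ̲_l = λ_l = λ̄_l = 0 for l ≠ j, λ_j ≥ 0, η = 1/‖a_j‖²), assume in addition that the three problems share the same primal solution: q̲ = q = q̄. Then |λ̲_j − λ_j| ≤ H₁ and |λ̄_j − λ_j| ≤ H₃ with H₁ = √η (L + μ)(‖q‖ + ‖r̲‖) and H₃ = 2√η L (‖q‖ + ‖r̄‖); consequently max{λ̲_j − H₁, λ̄_j − H₃, 0} ≤ λ_j ≤ min{λ̲_j + H₁, λ̄_j + H₃}. -/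

import Mathlib

/-!
Only the `j`-th multiplier is active, so subtracting the stationarity condition of the
original problem from that of a model problem with proximal weight `κ` anchored at `r`
leaves `(λ'_j − λ_j) a_j = (∇F q − ∇F r) − κ (q − r)`. Taking norms and using the Lipschitz
bound gives `|λ'_j − λ_j| ‖a_j‖ ≤ (L + κ)(‖q‖ + ‖r‖)`; take `κ = μ` and `κ = L`.
-/

open scoped RealInnerProductSpace

/-- `Aᵀ λ = ∑ l, λ_l a_l` where `a_l` is the `l`-th row of `A`, as a Euclidean vector. -/
noncomputable def transMul {m n : ℕ} (A : Matrix (Fin m) (Fin n) ℝ) (lam : Fin m → ℝ) :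
    EuclideanSpace ℝ (Fin n) :=
  WithLp.toLp 2 (fun i => ∑ l, lam l * A l i)

/-- The `j`-th row of `A` regarded as a Euclidean vector. -/
noncomputable def rowVec {m n : ℕ} (A : Matrix (Fin m) (Fin n) ℝ) (j : Fin m) :
    EuclideanSpace ℝ (Fin n) :=
  WithLp.toLp 2 (fun i => A j i)

theorem transMul_eq_smul_rowVec {m n : ℕ} (A : Matrix (Fin m) (Fin n) ℝ) {lam : Fin m → ℝ}
    {j : Fin m} (h : ∀ l, l ≠ j → lam l = 0) :
    transMul A lam = lam j • rowVec A j := by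
  ext i
  change ∑ l, lam l * A l i = lam j * A j i
  exact Finset.sum_eq_single j (fun l _ hl => by rw [h l hl, zero_mul]) (by simp)

theorem abs_le_sqrt_mul_of_abs_mul_norm_le {E : Type*} [NormedAddCommGroup E] {a : E}
    (ha : a ≠ 0) {c B : ℝ} (h : |c| * ‖a‖ ≤ B) : |c| ≤ √(1 / ‖a‖ ^ 2) * B := by
  rw [one_div, Real.sqrt_inv, Real.sqrt_sq (norm_nonneg a), inv_mul_eq_div,
    le_div_iff₀ (norm_pos_iff.2 ha)]
  exact h

section ProximalModel

variable {E : Type*} [NormedAddCommGroup E] [NormedSpace ℝ E] {G : E → E} {L κ c d : ℝ}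
  {q r b a : E}

theorem smul_sub_eq_of_stationary (hmodel : κ • (q - r) + G r + b + c • a = 0)
    (horig : G q + b + d • a = 0) :
    (c - d) • a = (G q - G r) - κ • (q - r) := by
  rw [sub_smul]
  linear_combination (norm := module) hmodel - horig

theorem norm_sub_sub_smul_le (hG : ∀ x y, ‖G x - G y‖ ≤ L * ‖x - y‖) (hL : 0 ≤ L) (hκ : 0 ≤ κ)
    (x y : E) : ‖(G x - G y) - κ • (x - y)‖ ≤ (L + κ) * (‖x‖ + ‖y‖) := by
  have hLκ : 0 ≤ L + κ := add_nonneg hL hκ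
  calc ‖(G x - G y) - κ • (x - y)‖ ≤ ‖G x - G y‖ + ‖κ • (x - y)‖ := norm_sub_le _ _
    _ ≤ L * ‖x - y‖ + κ * ‖x - y‖ := by
      rw [norm_smul, Real.norm_of_nonneg hκ]
      gcongr
      exact hG x y
    _ = (L + κ) * ‖x - y‖ := by ring
    _ ≤ (L + κ) * (‖x‖ + ‖y‖) := by gcongr; exact norm_sub_le x y

theorem abs_sub_le_of_stationary (hG : ∀ x y, ‖G x - G y‖ ≤ L * ‖x - y‖) (hL : 0 ≤ L)
    (hκ : 0 ≤ κ) (ha : a ≠ 0) (hmodel : κ • (q - r) + G r + b + c • a = 0)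
    (horig : G q + b + d • a = 0) :
    |c - d| ≤ √(1 / ‖a‖ ^ 2) * ((L + κ) * (‖q‖ + ‖r‖)) := by
  apply abs_le_sqrt_mul_of_abs_mul_norm_le ha
  rw [← Real.norm_eq_abs, ← norm_smul, smul_sub_eq_of_stationary hmodel horig]
  exact norm_sub_sub_smul_le hG hL hκ q r

end ProximalModel

theorem max_le_and_le_min_of_abs_sub_le {x y z H H' : ℝ} (hy : |y - x| ≤ H) (hz : |z - x| ≤ H')
    (hx : 0 ≤ x) : max (max (y - H) (z - H')) 0 ≤ x ∧ x ≤ min (y + H) (z + H') := by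
  rw [abs_le] at hy hz
  exact ⟨max_le (max_le (by linarith) (by linarith)) hx, le_min (by linarith) (by linarith)⟩

theorem dual_bounding_part_two_general
    (n m : ℕ) (F : EuclideanSpace ℝ (Fin n) → ℝ) (L μ : ℝ) (hL : 0 < L) (hμ : 0 < μ)
    (hlip : ∀ x y : EuclideanSpace ℝ (Fin n),
      ‖gradient F x - gradient F y‖ ≤ L * ‖x - y‖)
    (b0 rlow rup qlow q qup : EuclideanSpace ℝ (Fin n))
    (A : Matrix (Fin m) (Fin n) ℝ) (j : Fin m) (haj : rowVec A j ≠ 0)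
    (lamlow lam lamup : Fin m → ℝ)
    (hstatlow : μ • (qlow - rlow) + gradient F rlow + b0 + transMul A lamlow = 0)
    (hstat : gradient F q + b0 + transMul A lam = 0)
    (hstatup : L • (qup - rup) + gradient F rup + b0 + transMul A lamup = 0)
    (hcs : ∀ l, l ≠ j → lamlow l = 0 ∧ lam l = 0 ∧ lamup l = 0)
    (hlamj : 0 ≤ lam j)
    (hqlow : qlow = q) (hqup : qup = q)
    (η H1 H3 : ℝ)
    (hη : η = 1 / ‖rowVec A j‖ ^ 2)
    (hH1 : H1 = Real.sqrt η * ((L + μ) * (‖q‖ + ‖rlow‖)))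
    (hH3 : H3 = 2 * Real.sqrt η * (L * (‖q‖ + ‖rup‖))) :
    |lamlow j - lam j| ≤ H1 ∧ |lamup j - lam j| ≤ H3 ∧
      max (max (lamlow j - H1) (lamup j - H3)) 0 ≤ lam j ∧
      lam j ≤ min (lamlow j + H1) (lamup j + H3) := by
  subst hη hH1 hH3
  rw [hqlow, transMul_eq_smul_rowVec A fun l hl => (hcs l hl).1] at hstatlow
  rw [transMul_eq_smul_rowVec A fun l hl => (hcs l hl).2.1] at hstat
  rw [hqup, transMul_eq_smul_rowVec A fun l hl => (hcs l hl).2.2] at hstatup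
  have hlow := abs_sub_le_of_stationary hlip hL.le hμ.le haj hstatlow hstat
  have hup : |lamup j - lam j| ≤ 2 * √(1 / ‖rowVec A j‖ ^ 2) * (L * (‖q‖ + ‖rup‖)) := by
    convert abs_sub_le_of_stationary hlip hL.le hL.le haj hstatup hstat using 1
    ring
  exact ⟨hlow, hup, max_le_and_le_min_of_abs_sub_le hlow hup hlamj⟩

/-- Dual Bounding Theorem, part (2): under the hypotheses of part (1), if moreover the
lower model, original, and upper model problems share the same primal solution
(`q̲ = q = q̄`), then `|λ̲_j − λ_j| ≤ H₁` and `|λ̄_j − λ_j| ≤ H₃` with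
`H₁ = √η (L + μ)(‖q‖ + ‖r̲‖)` and `H₃ = 2√η L (‖q‖ + ‖r̄‖)`, and consequently
`max{λ̲_j − H₁, λ̄_j − H₃, 0} ≤ λ_j ≤ min{λ̲_j + H₁, λ̄_j + H₃}`. -/
theorem dual_bounding_part_two
    (n m : ℕ) (F : EuclideanSpace ℝ (Fin n) → ℝ) (L μ : ℝ) (hL : 0 < L) (hμ : 0 < μ)
    (hF : Differentiable ℝ F)
    (hlip : ∀ x y : EuclideanSpace ℝ (Fin n),
      ‖gradient F x - gradient F y‖ ≤ L * ‖x - y‖)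
    (b0 rlow rup qlow q qup : EuclideanSpace ℝ (Fin n))
    (A : Matrix (Fin m) (Fin n) ℝ) (j : Fin m) (haj : rowVec A j ≠ 0)
    (lamlow lam lamup : Fin m → ℝ)
    (hstatlow : μ • (qlow - rlow) + gradient F rlow + b0 + transMul A lamlow = 0)
    (hstat : gradient F q + b0 + transMul A lam = 0)
    (hstatup : L • (qup - rup) + gradient F rup + b0 + transMul A lamup = 0)
    (hcs : ∀ l, l ≠ j → lamlow l = 0 ∧ lam l = 0 ∧ lamup l = 0)
    (hlamj : 0 ≤ lam j)
    (hqlow : qlow = q) (hqup : qup = q)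
    (η H1 H3 : ℝ)
    (hη : η = 1 / ‖rowVec A j‖ ^ 2)
    (hH1 : H1 = Real.sqrt η * ((L + μ) * (‖q‖ + ‖rlow‖)))
    (hH3 : H3 = 2 * Real.sqrt η * (L * (‖q‖ + ‖rup‖))) :
    |lamlow j - lam j| ≤ H1 ∧ |lamup j - lam j| ≤ H3 ∧
      max (max (lamlow j - H1) (lamup j - H3)) 0 ≤ lam j ∧
      lam j ≤ min (lamlow j + H1) (lamup j + H3) :=
  dual_bounding_part_two_general n m F L μ hL hμ hlip b0 rlow rup qlow q qup A j haj lamlow lam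
    lamup hstatlow hstat hstatup hcs hlamj hqlow hqup η H1 H3 hη hH1 hH3
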